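/- Let ε > 0, θ ∈ (0,π/2), and U = U_{θ,1} be the solution of U'' = (1+(U')²)^{5/4}√(√(1+(U')²)−1), U(0)=0, U'(0)=tan θ on (−∞,0]. Then ∫_{−ε^{−1/3}}^{0} [ (U''/(1+(U')²)^{3/2})² √(1+(U')²) + (√(1+(U')²) − 1) ] dx = f(U'(0)) − f(U'(−ε^{−1/3})), where f(y) = ∫₀^y 2√(√(1+z²)−1)/(1+z²)^{5/4} dz; consequently this quantity converges to 4(√2 − √(1+cos θ)) as ε ↓ 0. -/

import Mathlib

open Real Set Filter MeasureTheory intervalIntegral Topology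

/-- `U` solves the profile equation `U'' = (1+(U')²)^{5/4}√(√(1+(U')²)−1)` on `(−∞,0]`
with `U(0)=0`, `U'(0)=tan θ`. -/
def IsProfileSol1 (θ : ℝ) (U : ℝ → ℝ) : Prop :=
  (∀ x ≤ (0:ℝ), DifferentiableAt ℝ U x ∧ DifferentiableAt ℝ (deriv U) x) ∧
  U 0 = 0 ∧ deriv U 0 = Real.tan θ ∧
  ∀ x ≤ (0:ℝ), deriv (deriv U) x =
    (1 + (deriv U x) ^ 2) ^ ((5:ℝ)/4) *
      Real.sqrt (Real.sqrt (1 + (deriv U x) ^ 2) - 1)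

/-!
Along the profile ODE `U'' = F(U')` (`F = profileRhs`) the curvature term `κ²√(1+U'²)`,
`κ = U''/(1+U'²)^{3/2}`, equals the potential term `√(1+U'²) − 1` pointwise, so the integrand
is `2(√(1+U'²) − 1) = U'' · g(U')` with `g = f' = energyDensity`, and the integral telescopes
to `f(U'(0)) − f(U'(a))`. On `[0, ∞)`, `g` has the primitive `4√2 − 4√(1 + 1/√(1+y²))`,
which at `y = tan θ` gives `4(√2 − √(1 + cos θ))`.

For the limit: `U'' = F(U') ≥ 0`, so `U'` is nondecreasing. It is nonnegative, since a negative
value `p` would make `−1/p` increase at a uniform rate and so blow up in finite time, and it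
tends to `0` at `−∞`, since `U' ≥ δ > 0` would give `U'' ≥ F(δ) > 0` and `U' → −∞`.
-/

noncomputable def profileRhs (t : ℝ) : ℝ :=
  (1 + t ^ 2) ^ ((5:ℝ)/4) * √(√(1 + t ^ 2) - 1)

noncomputable def energyDensity (t : ℝ) : ℝ :=
  2 * √(√(1 + t ^ 2) - 1) / (1 + t ^ 2) ^ ((5:ℝ)/4)

noncomputable def modicaMortolaIntegrand (d t : ℝ) : ℝ :=
  (d / (1 + t ^ 2) ^ ((3:ℝ)/2)) ^ 2 * √(1 + t ^ 2) + (√(1 + t ^ 2) - 1)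

noncomputable def energyPrimitive (y : ℝ) : ℝ :=
  4 * √2 - 4 * √(1 + (√(1 + y ^ 2))⁻¹)

lemma one_le_sqrt_one_add_sq (t : ℝ) : 1 ≤ √(1 + t ^ 2) :=
  one_le_sqrt.2 (by nlinarith)

lemma continuous_profileRhs : Continuous profileRhs := by
  unfold profileRhs
  fun_prop (disch := norm_num)

lemma continuous_energyDensity : Continuous energyDensity := by
  unfold energyDensity
  refine Continuous.div (by fun_prop) (by fun_prop (disch := norm_num)) fun t => ?_
  positivity

lemma profileRhs_nonneg (t : ℝ) : 0 ≤ profileRhs t := by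
  unfold profileRhs; positivity

lemma sqrt_sqrt_one_add_sq_sub_one_pos {m : ℝ} (hm : m ≠ 0) : 0 < √(√(1 + m ^ 2) - 1) := by
  refine sqrt_pos.2 (sub_pos.2 ((lt_sqrt zero_le_one).2 ?_))
  simpa using pow_pos (abs_pos.2 hm) 2

lemma sq_mul_le_profileRhs {m t : ℝ} (h : m ^ 2 ≤ t ^ 2) :
    t ^ 2 * √(√(1 + m ^ 2) - 1) ≤ profileRhs t := by
  have hA : t ^ 2 ≤ (1 + t ^ 2) ^ ((5:ℝ)/4) := calc
    t ^ 2 ≤ 1 + t ^ 2 := by linarith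
    _ = (1 + t ^ 2) ^ (1:ℝ) := (rpow_one _).symm
    _ ≤ _ := rpow_le_rpow_of_exponent_le (by nlinarith) (by norm_num)
  have hs : √(√(1 + m ^ 2) - 1) ≤ √(√(1 + t ^ 2) - 1) := by gcongr
  exact mul_le_mul hA hs (sqrt_nonneg _) (by positivity)

lemma rpow_five_div_four {A : ℝ} (hA : 0 ≤ A) : A ^ ((5:ℝ)/4) = A * √(√A) := by
  rw [sqrt_eq_rpow, sqrt_eq_rpow, ← rpow_mul hA,
    ← rpow_one_add' hA (by norm_num : (1:ℝ) + 1/2 * (1/2) ≠ 0)]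
  norm_num

lemma rpow_three_div_two {A : ℝ} (hA : 0 ≤ A) : A ^ ((3:ℝ)/2) = A * √A := by
  rw [sqrt_eq_rpow, ← rpow_one_add' hA (by norm_num : (1:ℝ) + 1/2 ≠ 0)]
  norm_num

lemma profileRhs_div_sq_mul_sqrt (t : ℝ) :
    (profileRhs t / (1 + t ^ 2) ^ ((3:ℝ)/2)) ^ 2 * √(1 + t ^ 2) = √(1 + t ^ 2) - 1 := by
  have hA : 0 < 1 + t ^ 2 := by positivity
  have hs : 0 < √(1 + t ^ 2) := sqrt_pos.2 hA
  rw [profileRhs, rpow_five_div_four hA.le, rpow_three_div_two hA.le]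
  have hr : √(√(1 + t ^ 2)) ^ 2 = √(1 + t ^ 2) := sq_sqrt hs.le
  have hq : √(√(1 + t ^ 2) - 1) ^ 2 = √(1 + t ^ 2) - 1 :=
    sq_sqrt (sub_nonneg.2 (one_le_sqrt_one_add_sq t))
  field_simp
  rw [hr, hq]

lemma profileRhs_mul_energyDensity (t : ℝ) :
    profileRhs t * energyDensity t = 2 * (√(1 + t ^ 2) - 1) := by
  have hA : 0 < (1 + t ^ 2) ^ ((5:ℝ)/4) := by positivity
  have hq : √(√(1 + t ^ 2) - 1) ^ 2 = √(1 + t ^ 2) - 1 :=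
    sq_sqrt (sub_nonneg.2 (one_le_sqrt_one_add_sq t))
  rw [profileRhs, energyDensity]
  field_simp
  rw [hq]

lemma modicaMortolaIntegrand_profileRhs (t : ℝ) :
    modicaMortolaIntegrand (profileRhs t) t = profileRhs t * energyDensity t := by
  rw [modicaMortolaIntegrand, profileRhs_div_sq_mul_sqrt, profileRhs_mul_energyDensity]
  ring

lemma hasDerivAt_energyPrimitive {y : ℝ} (hy : 0 ≤ y) :
    HasDerivAt energyPrimitive (energyDensity y) y := by
  have hA : 0 < 1 + y ^ 2 := by positivity
  set s := √(1 + y ^ 2) with hs_def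
  have hs1 : 1 ≤ s := one_le_sqrt_one_add_sq y
  have hs0 : 0 < s := by linarith
  have hsq : s ^ 2 = 1 + y ^ 2 := sq_sqrt hA.le
  have hs : HasDerivAt (fun y : ℝ => √(1 + y ^ 2)) (y / s) y := by
    convert ((hasDerivAt_pow 2 y).const_add 1).sqrt hA.ne' using 1
    field_simp
    ring
  have hinv : 0 < 1 + s⁻¹ := by positivity
  refine (((((hs.inv hs0.ne').const_add 1).sqrt hinv.ne').const_mul 4).const_sub
    (4 * √2)).congr_deriv ?_
  have hsqrt_inv : √(1 + s⁻¹) = √(s + 1) / √s := by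
    rw [show 1 + s⁻¹ = (s + 1) / s by field_simp, sqrt_div (by linarith)]
  have hy_eq : √(s - 1) * √(s + 1) = y := by
    rw [← sqrt_mul (by linarith), show (s - 1) * (s + 1) = y ^ 2 by nlinarith, sqrt_sq hy]
  have hss : √s * √s = s := mul_self_sqrt hs0.le
  have : 0 < √s := sqrt_pos.2 hs0
  have : 0 < √(s + 1) := sqrt_pos.2 (by linarith)
  simp only [Pi.inv_apply]
  rw [energyDensity, rpow_five_div_four hA.le, ← hs_def, hsqrt_inv, ← hsq]
  field_simp
  linear_combination (4 * y) * hss - (4 * s) * hy_eq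

lemma integral_energyDensity_tan {θ : ℝ} (h0 : 0 ≤ θ) (hπ : θ < π / 2) :
    ∫ z in (0:ℝ)..tan θ, energyDensity z = 4 * (√2 - √(1 + cos θ)) := by
  have hcos : 0 < cos θ := cos_pos_of_mem_Ioo ⟨by linarith [pi_pos], hπ⟩
  have htan : 0 ≤ tan θ := tan_nonneg_of_nonneg_of_le_pi_div_two h0 hπ.le
  have hderiv : ∀ y ∈ uIcc 0 (tan θ), HasDerivAt energyPrimitive (energyDensity y) y := by
    rw [uIcc_of_le htan]
    exact fun y hy => hasDerivAt_energyPrimitive hy.1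
  rw [integral_eq_sub_of_hasDerivAt hderiv (continuous_energyDensity.intervalIntegrable _ _)]
  norm_num [energyPrimitive, inv_sqrt_one_add_tan_sq hcos, mul_sub]

theorem integral_modicaMortolaIntegrand_eq {p p' : ℝ → ℝ} {a b : ℝ}
    (hp : ∀ x ∈ uIcc a b, HasDerivAt p (p' x) x)
    (hode : ∀ x ∈ uIcc a b, p' x = profileRhs (p x)) :
    ∫ x in a..b, modicaMortolaIntegrand (p' x) (p x) = ∫ z in p a..p b, energyDensity z := by
  have hp' : ContinuousOn p' (uIcc a b) :=
    (continuous_profileRhs.comp_continuousOn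
      fun x hx => (hp x hx).continuousAt.continuousWithinAt).congr hode
  rw [← integral_comp_mul_deriv hp hp' continuous_energyDensity]
  refine integral_congr fun x hx => ?_
  simp only [hode x hx, modicaMortolaIntegrand_profileRhs, Function.comp_apply, mul_comm]

lemma mul_sub_le_sub_of_le_hasDerivAt {p p' : ℝ → ℝ} {b C x y : ℝ}
    (hp : ∀ x ≤ b, HasDerivAt p (p' x) x) (hC : ∀ x ≤ b, C ≤ p' x)
    (hxy : x ≤ y) (hy : y ≤ b) :
    C * (y - x) ≤ p y - p x := by
  refine (convex_Iic b).mul_sub_le_image_sub_of_le_deriv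
    (fun x hx => (hp x hx).continuousAt.continuousWithinAt) ?_ ?_ x (hxy.trans hy) y hy hxy
  · rw [interior_Iic]
    exact fun x hx => (hp x hx.le).differentiableAt.differentiableWithinAt
  · rw [interior_Iic]
    exact fun x hx => (hp x hx.le).deriv ▸ hC x hx.le

lemma tendsto_atBot_of_pos_le_hasDerivAt {p p' : ℝ → ℝ} {b c : ℝ} (hc : 0 < c)
    (hp : ∀ x ≤ b, HasDerivAt p (p' x) x) (hle : ∀ x ≤ b, c ≤ p' x) :
    Tendsto p atBot atBot := by
  refine tendsto_atBot_mono' atBot ?_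
    (tendsto_atBot_add_const_left _ (p b - c * b) (tendsto_id.const_mul_atBot hc))
  filter_upwards [eventually_le_atBot b] with x hx
  simp only [id]
  linarith [mul_sub_le_sub_of_le_hasDerivAt hp hle hx le_rfl]

section ProfileSlope

variable {p : ℝ → ℝ} {b : ℝ}

lemma monotoneOn_of_hasDerivAt_profileRhs (hp : ∀ x ≤ b, HasDerivAt p (profileRhs (p x)) x) :
    MonotoneOn p (Iic b) := fun x _ y hy hxy => by
  simpa using mul_sub_le_sub_of_le_hasDerivAt hp (fun x _ => profileRhs_nonneg (p x)) hxy hy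

lemma nonneg_of_hasDerivAt_profileRhs (hp : ∀ x ≤ b, HasDerivAt p (profileRhs (p x)) x)
    {x₀ : ℝ} (hx₀ : x₀ ≤ b) : 0 ≤ p x₀ := by
  by_contra! hneg
  have hle : ∀ x ≤ x₀, p x ≤ p x₀ := fun x hx =>
    monotoneOn_of_hasDerivAt_profileRhs hp (hx.trans hx₀) hx₀ hx
  have hblow : Tendsto (fun x => -(p x)⁻¹) atBot atBot := by
    refine tendsto_atBot_of_pos_le_hasDerivAt (sqrt_sqrt_one_add_sq_sub_one_pos hneg.ne)
      (fun x hx => ((hp x (hx.trans hx₀)).inv (hle x hx |>.trans_lt hneg).ne).neg)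
      fun x hx => ?_
    have hpx : p x < 0 := (hle x hx).trans_lt hneg
    rw [neg_div, neg_neg, le_div_iff₀ (by nlinarith)]
    exact sq_mul_le_profileRhs (by nlinarith [hle x hx]) |>.trans_eq' (mul_comm _ _)
  obtain ⟨x, hblown, hx⟩ := ((hblow.eventually (eventually_le_atBot 0)).and
    (eventually_le_atBot x₀)).exists
  have : (p x)⁻¹ < 0 := inv_lt_zero.2 ((hle x hx).trans_lt hneg)
  linarith

lemma tendsto_zero_of_hasDerivAt_profileRhs (hp : ∀ x ≤ b, HasDerivAt p (profileRhs (p x)) x) :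
    Tendsto p atBot (𝓝 0) := by
  refine tendsto_order.2 ⟨fun a ha => ?_, fun a ha => ?_⟩
  · filter_upwards [eventually_le_atBot b] with x hx
    exact ha.trans_le (nonneg_of_hasDerivAt_profileRhs hp hx)
  obtain ⟨x₀, hx₀, hlt⟩ : ∃ x₀ ≤ b, p x₀ < a := by
    by_contra! hge
    have hc : 0 < a ^ 2 * √(√(1 + a ^ 2) - 1) :=
      mul_pos (pow_pos ha 2) (sqrt_sqrt_one_add_sq_sub_one_pos ha.ne')
    have hrate : ∀ x ≤ b, a ^ 2 * √(√(1 + a ^ 2) - 1) ≤ profileRhs (p x) := fun x hx =>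
      have hsq : a ^ 2 ≤ p x ^ 2 := pow_le_pow_left₀ ha.le (hge x hx) 2
      (mul_le_mul_of_nonneg_right hsq (sqrt_nonneg _)).trans (sq_mul_le_profileRhs hsq)
    obtain ⟨x, hsmall, hx⟩ := (((tendsto_atBot_of_pos_le_hasDerivAt hc hp hrate).eventually
      (eventually_lt_atBot a)).and (eventually_le_atBot b)).exists
    exact (hge x hx).not_gt hsmall
  filter_upwards [eventually_le_atBot x₀] with x hx
  exact (monotoneOn_of_hasDerivAt_profileRhs hp (hx.trans hx₀) hx₀ hx).trans_lt hlt

end ProfileSlope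

/-- equipartition of energy along the profile ODE: for every `ε > 0`,
`∫_{−ε^{−1/3}}^0 [κ_U²√(1+U'²) + (√(1+U'²) − 1)] dx = f(U'(0)) − f(U'(−ε^{−1/3}))`,
and this quantity converges to `4(√2 − √(1+cos θ))` as `ε ↓ 0`, where
`f(y) = ∫₀^y 2√(√(1+z²)−1)/(1+z²)^{5/4} dz`. -/
theorem equipartition_along_profile
    (θ : ℝ) (hθ : θ ∈ Ioo (0:ℝ) (π / 2))
    (U : ℝ → ℝ) (hU : IsProfileSol1 θ U)
    (f : ℝ → ℝ)
    (hf : ∀ y : ℝ, f y =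
      ∫ z in (0:ℝ)..y, 2 * Real.sqrt (Real.sqrt (1 + z ^ 2) - 1) / (1 + z ^ 2) ^ ((5:ℝ)/4)) :
    (∀ ε : ℝ, 0 < ε →
      (∫ x in (-(ε ^ (-(1:ℝ)/3)))..(0:ℝ),
        (deriv (deriv U) x / (1 + (deriv U x) ^ 2) ^ ((3:ℝ)/2)) ^ 2 *
            Real.sqrt (1 + (deriv U x) ^ 2)
          + (Real.sqrt (1 + (deriv U x) ^ 2) - 1))
        = f (deriv U 0) - f (deriv U (-(ε ^ (-(1:ℝ)/3))))) ∧
    Tendsto (fun ε : ℝ =>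
      ∫ x in (-(ε ^ (-(1:ℝ)/3)))..(0:ℝ),
        (deriv (deriv U) x / (1 + (deriv U x) ^ 2) ^ ((3:ℝ)/2)) ^ 2 *
            Real.sqrt (1 + (deriv U x) ^ 2)
          + (Real.sqrt (1 + (deriv U x) ^ 2) - 1))
      (nhdsWithin 0 (Ioi 0))
      (nhds (4 * (Real.sqrt 2 - Real.sqrt (1 + Real.cos θ)))) := by
  obtain ⟨hdiff, -, hslope₀, hode⟩ := hU
  have hslope : ∀ x ≤ (0:ℝ), HasDerivAt (deriv U) (deriv (deriv U) x) x :=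
    fun x hx => (hdiff x hx).2.hasDerivAt
  have hf' : f = fun y => ∫ z in (0:ℝ)..y, energyDensity z := funext hf
  have hdensity : ∀ a b : ℝ, IntervalIntegrable energyDensity volume a b :=
    continuous_energyDensity.intervalIntegrable
  have htelescope : ∀ a ≤ (0:ℝ),
      ∫ x in a..0, modicaMortolaIntegrand (deriv (deriv U) x) (deriv U x)
        = f (deriv U 0) - f (deriv U a) := by
    intro a ha
    have hle : ∀ x ∈ uIcc a 0, x ≤ 0 := fun x hx => (uIcc_of_le ha ▸ hx).2
    rw [integral_modicaMortolaIntegrand_eq (fun x hx => hslope x (hle x hx))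
      (fun x hx => hode x (hle x hx)), hf',
      integral_interval_sub_left (hdensity _ _) (hdensity _ _)]
  have hcut : ∀ ε : ℝ, 0 < ε → -(ε ^ (-(1:ℝ)/3)) ≤ 0 :=
    fun ε hε => neg_nonpos.2 (rpow_pos_of_pos hε _).le
  refine ⟨fun ε hε => htelescope _ (hcut ε hε), ?_⟩
  have hcut_tendsto : Tendsto (fun ε : ℝ => -(ε ^ (-(1:ℝ)/3))) (𝓝[>] 0) atBot :=
    tendsto_neg_atTop_atBot.comp (tendsto_rpow_neg_nhdsGT_zero (by norm_num))
  have hslope_tendsto : Tendsto (deriv U) atBot (𝓝 0) :=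
    tendsto_zero_of_hasDerivAt_profileRhs (b := 0) fun x hx => (hslope x hx).congr_deriv (hode x hx)
  have hf_cont : Continuous f := hf' ▸ continuous_primitive hdensity 0
  have hlimit : f (deriv U 0) - f 0 = 4 * (√2 - √(1 + cos θ)) := by
    simp only [hslope₀, hf', integral_same, sub_zero]
    exact integral_energyDensity_tan hθ.1.le hθ.2
  rw [← hlimit]
  refine (tendsto_const_nhds.sub ((hf_cont.tendsto 0).comp
    (hslope_tendsto.comp hcut_tendsto))).congr' ?_
  filter_upwards [self_mem_nhdsWithin] with ε hε
  exact (htelescope _ (hcut ε hε)).symm
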